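/- The Jaccard distance d(A, B) = 1 − |A ∩ B| / |A ∪ B| satisfies the triangle inequality on finite subsets of a fixed finite set (with d(∅, ∅) defined as 0), and hence is a metric on the collection of such subsets. -/

import Mathlib

/-!
Write `d(A, B) = #(A ∆ B) / #(A ∪ B)`. With `D = B \ (A ∪ C)`, every point of `D` lies in both
`A ∆ B` and `B ∆ C` but not in `A ∆ C`, so `#(A ∆ C) + 2 #D ≤ #(A ∆ B) + #(B ∆ C)`. As
`#(A ∆ C) ≤ #(A ∪ C)`, adding `2 #D` to the numerator of `d(A, C)` and `#D` to its denominator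
does not decrease it, and the new denominator `#(A ∪ B ∪ C)` is at least `#(A ∪ B)` and `#(B ∪ C)`.
-/

/-- The Jaccard distance of two finite sets, with `d(∅, ∅) = 0`. -/
def jaccardDist {α : Type*} [DecidableEq α] (A B : Finset α) : ℚ :=
  if A ∪ B = ∅ then 0 else 1 - ((A ∩ B).card : ℚ) / ((A ∪ B).card : ℚ)

open Finset
open scoped symmDiff

theorem div_le_add_two_mul_div_add {K : Type*} [Field K] [LinearOrder K] [IsStrictOrderedRing K]
    {a b d : K} (ha : 0 ≤ a) (hab : a ≤ b) (hd : 0 ≤ d) : a / b ≤ (a + 2 * d) / (b + d) := by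
  rcases (ha.trans hab).eq_or_lt with rfl | hb
  · obtain rfl : a = 0 := le_antisymm hab ha
    simp only [zero_div, zero_add]
    positivity
  · rw [div_le_div_iff₀ hb (by positivity)]
    nlinarith

section
variable {α : Type*} [DecidableEq α]

theorem Finset.card_symmDiff_add_card_inter (A B : Finset α) :
    #(A ∆ B) + #(A ∩ B) = #(A ∪ B) := by
  rw [symmDiff_eq_sup_sdiff_inf]
  exact card_sdiff_add_card_eq_card inter_subset_union

theorem Finset.card_symmDiff_add_two_mul_card_sdiff_union_le (A B C : Finset α) :
    #(A ∆ C) + 2 * #(B \ (A ∪ C)) ≤ #(A ∆ B) + #(B ∆ C) := by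
  set D := B \ (A ∪ C)
  have hD : D ⊆ A ∆ B ∩ B ∆ C := by
    intro x hx
    simp only [D, mem_sdiff, mem_union] at hx
    simp only [mem_inter, mem_symmDiff]
    tauto
  have hsub : A ∆ C ∪ D ⊆ A ∆ B ∪ B ∆ C :=
    union_subset (symmDiff_triangle A B C) (hD.trans inter_subset_union)
  have hdisj : Disjoint (A ∆ C) D :=
    disjoint_of_subset_left symmDiff_le_sup disjoint_sdiff
  have hsub_card := card_le_card hsub
  rw [card_union_of_disjoint hdisj] at hsub_card
  have hD_card := card_le_card hD
  have := card_union_add_card_inter (A ∆ B) (B ∆ C)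
  omega

theorem Finset.card_union_union_eq_card_union_add_card_sdiff (A B C : Finset α) :
    #(A ∪ B ∪ C) = #(A ∪ C) + #(B \ (A ∪ C)) := by
  rw [add_comm, card_sdiff_add_card, union_right_comm, union_comm]

theorem jaccardDist_eq_card_symmDiff_div (A B : Finset α) :
    jaccardDist A B = #(A ∆ B) / #(A ∪ B) := by
  unfold jaccardDist
  split_ifs with h
  · obtain ⟨rfl, rfl⟩ := union_eq_empty.1 h
    simp
  · have hne : (#(A ∪ B) : ℚ) ≠ 0 := by simpa using h
    rw [eq_div_iff hne, sub_mul, div_mul_cancel₀ _ hne, one_mul, ← card_symmDiff_add_card_inter]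
    push_cast
    ring

theorem card_symmDiff_div_le_jaccardDist {A B S : Finset α} (h : A ∪ B ⊆ S) :
    (#(A ∆ B) : ℚ) / #S ≤ jaccardDist A B := by
  rw [jaccardDist_eq_card_symmDiff_div]
  rcases (A ∪ B).eq_empty_or_nonempty with hAB | hAB
  · obtain ⟨rfl, rfl⟩ := union_eq_empty.1 hAB
    simp
  · exact div_le_div_of_nonneg_left (by positivity) (mod_cast hAB.card_pos)
      (mod_cast card_le_card h)

theorem jaccardDist_triangle (A B C : Finset α) :
    jaccardDist A C ≤ jaccardDist A B + jaccardDist B C := by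
  set D := B \ (A ∪ C)
  have hAC : (#(A ∆ C) : ℚ) ≤ #(A ∪ C) := mod_cast card_le_card symmDiff_le_sup
  have hkey : (#(A ∆ C) : ℚ) + 2 * #D ≤ #(A ∆ B) + #(B ∆ C) :=
    mod_cast card_symmDiff_add_two_mul_card_sdiff_union_le A B C
  calc jaccardDist A C = #(A ∆ C) / #(A ∪ C) := jaccardDist_eq_card_symmDiff_div A C
    _ ≤ (#(A ∆ C) + 2 * #D) / (#(A ∪ C) + #D) :=
        div_le_add_two_mul_div_add (by positivity) hAC (by positivity)
    _ = (#(A ∆ C) + 2 * #D) / #(A ∪ B ∪ C) := by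
        rw [card_union_union_eq_card_union_add_card_sdiff, Nat.cast_add]
    _ ≤ (#(A ∆ B) + #(B ∆ C)) / #(A ∪ B ∪ C) := by gcongr
    _ = #(A ∆ B) / #(A ∪ B ∪ C) + #(B ∆ C) / #(A ∪ B ∪ C) := add_div _ _ _
    _ ≤ jaccardDist A B + jaccardDist B C :=
        add_le_add (card_symmDiff_div_le_jaccardDist subset_union_left)
          (card_symmDiff_div_le_jaccardDist (union_assoc A B C ▸ subset_union_right))

theorem jaccardDist_comm (A B : Finset α) : jaccardDist A B = jaccardDist B A := by
  rw [jaccardDist, jaccardDist, union_comm, inter_comm]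

theorem jaccardDist_eq_zero_iff {A B : Finset α} : jaccardDist A B = 0 ↔ A = B := by
  rw [jaccardDist_eq_card_symmDiff_div, div_eq_zero_iff, Nat.cast_eq_zero, Nat.cast_eq_zero,
    card_eq_zero, card_eq_zero, union_eq_empty, ← bot_eq_empty, symmDiff_eq_bot]
  exact ⟨fun h => h.elim id fun ⟨hA, hB⟩ => hA.trans hB.symm, Or.inl⟩

end

/-- The Jaccard distance `d(A,B) = 1 − |A ∩ B|/|A ∪ B|` (with
`d(∅,∅) = 0`) satisfies the triangle inequality, is symmetric, and vanishes
exactly on equal sets; hence it is a metric on finite subsets. -/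
theorem jaccardDist_is_metric {α : Type*} [DecidableEq α] :
    (∀ A B C : Finset α, jaccardDist A C ≤ jaccardDist A B + jaccardDist B C) ∧
    (∀ A B : Finset α, jaccardDist A B = jaccardDist B A) ∧
    (∀ A B : Finset α, jaccardDist A B = 0 ↔ A = B) :=
  ⟨jaccardDist_triangle, jaccardDist_comm, fun _ _ => jaccardDist_eq_zero_iff⟩
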